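/- Let B⁽⁰⁾, B⁽¹⁾ be operator-collections, 0 ≤ μ' < μ, and suppose 2e·||B⁽¹⁾||_μ/(μ−μ') ≤ 1/2. Then ||exp(i·ad_{B⁽¹⁾})(B⁽⁰⁾) − B⁽⁰⁾||_{μ'} ≤ (8e/(μ−μ')²)·||B⁽⁰⁾||_μ·||B⁽¹⁾||_μ, and consequently ||exp(i·ad_{B⁽¹⁾})(B⁽⁰⁾)||_{μ'} ≤ ||B⁽⁰⁾||_μ·(1 + 8e·||B⁽¹⁾||_μ/(μ−μ')²). -/

import Mathlib

open scoped BigOperators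
set_option linter.unusedSectionVars false
open Matrix

noncomputable section

namespace QLDPC

open scoped Classical

/-- The four Pauli matrices 1, X, Y, Z. -/
def pauliMat : Fin 4 → Matrix (Fin 2) (Fin 2) ℂ
  | 0 => 1
  | 1 => !![0, 1; 1, 0]
  | 2 => !![0, -Complex.I; Complex.I, 0]
  | 3 => !![1, 0; 0, -1]

variable {Λ E : Type}

/-- Operators on the Hilbert space (ℂ²)^{⊗Λ}. -/
abbrev Op (Λ : Type) [Fintype Λ] [DecidableEq Λ] := Matrix (Λ → Fin 2) (Λ → Fin 2) ℂ

/-- The operator of a Pauli string `p : Λ → Fin 4`. -/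
def pauliOp [Fintype Λ] [DecidableEq Λ] (p : Λ → Fin 4) : Op Λ :=
  fun f g => ∏ x, pauliMat (p x) (f x) (g x)

/-- Qubit support of a Pauli string. -/
def psupp [Fintype Λ] (p : Λ → Fin 4) : Finset Λ :=
  Finset.univ.filter fun x => p x ≠ 0

/-- The operator norm (largest singular value). -/
def opNorm [Fintype Λ] [DecidableEq Λ] (A : Op Λ) : ℝ :=
  ‖Matrix.toEuclideanCLM (𝕜 := ℂ) A‖

/-- Coefficient of the Pauli string `p` in the Pauli-basis expansion of `A`. -/
def pauliCoeff [Fintype Λ] [DecidableEq Λ] (A : Op Λ) (p : Λ → Fin 4) : ℂ :=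
  Matrix.trace (pauliOp p * A) / ((2 : ℂ) ^ Fintype.card Λ)

/-- Qubit support of a general operator, via its Pauli expansion. -/
def opSupp [Fintype Λ] [DecidableEq Λ] (A : Op Λ) : Set Λ :=
  {x | ∃ p : Λ → Fin 4, pauliCoeff A p ≠ 0 ∧ p x ≠ 0}

/-- The data of a family of stabilizer checks: each check is a signed Pauli string. -/
structure Checks (Λ E : Type) where
  str : E → Λ → Fin 4
  sgn : E → Bool

variable [Fintype Λ] [DecidableEq Λ] [Fintype E]

/-- The operator of check α. -/
def checkOp (K : Checks Λ E) (α : E) : Op Λ :=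
  (if K.sgn α then (-1 : ℂ) else 1) • pauliOp (K.str α)

/-- G_α = (1 + C_α)/2. -/
def Gop (K : Checks Λ E) (α : E) : Op Λ := (2⁻¹ : ℂ) • (1 + checkOp K α)

/-- E_α = (1 - C_α)/2. -/
def Eop (K : Checks Λ E) (α : E) : Op Λ := (2⁻¹ : ℂ) • (1 - checkOp K α)

/-- The stabilizer Hamiltonian H₀ = Σ_α E_α. -/
def H0 (K : Checks Λ E) : Op Λ := ∑ α, Eop K α

/-- The stabilizer group 𝒢 generated by the checks (as a submonoid; each check squares to 1). -/
def stab (K : Checks Λ E) : Submonoid (Op Λ) :=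
  Submonoid.closure (Set.range (checkOp K))

/-- All checks pairwise commute (𝒢 abelian). -/
def CommChecks (K : Checks Λ E) : Prop := ∀ α β, Commute (checkOp K α) (checkOp K β)

/-- Check support of a qubit. -/
def suppC (K : Checks Λ E) (x : Λ) : Finset E :=
  Finset.univ.filter fun α => x ∈ psupp (K.str α)

/-- The qubit interaction graph. -/
def qubitGraph (K : Checks Λ E) : SimpleGraph Λ :=
  SimpleGraph.fromRel fun x y => ∃ α, x ∈ psupp (K.str α) ∧ y ∈ psupp (K.str α)

/-- The check interaction graph. -/
def checkGraph (K : Checks Λ E) : SimpleGraph E :=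
  SimpleGraph.fromRel fun α β => (psupp (K.str α) ∩ psupp (K.str β)).Nonempty

/-- `y` lies in the (closed) ball of radius `r` around `x` in the graph `G`. -/
def inBall {V : Type} (G : SimpleGraph V) (x y : V) (r : ℝ) : Prop :=
  G.Reachable x y ∧ (G.dist x y : ℝ) ≤ r

/-- Ball in the qubit graph. -/
def ballQ (K : Checks Λ E) (x : Λ) (r : ℝ) : Finset Λ :=
  Finset.univ.filter fun y => inBall (qubitGraph K) x y r

/-- Ball in the check graph. -/
def ballC (K : Checks Λ E) (α : E) (r : ℝ) : Finset E :=
  Finset.univ.filter fun β => inBall (checkGraph K) α β r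

/-- Ball of radius `r` around a set of checks. -/
def ballCS (K : Checks Λ E) (S : Finset E) (r : ℝ) : Finset E :=
  Finset.univ.filter fun β => ∃ α ∈ S, inBall (checkGraph K) α β r

/-- Growth of balls condition: |B_r| ≤ e^{κ r} on both graphs. -/
def BallGrowth (K : Checks Λ E) (κ : ℝ) : Prop :=
  (∀ (x : Λ) (r : ℝ), ((ballQ K x r).card : ℝ) ≤ Real.exp (κ * r)) ∧
  (∀ (α : E) (r : ℝ), ((ballC K α r).card : ℝ) ≤ Real.exp (κ * r))

/-- A finite set is connected in a graph if the induced subgraph is connected. -/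
def ConnIn {V : Type} (G : SimpleGraph V) (S : Finset V) : Prop :=
  (G.induce (S : Set V)).Connected

/-- Qubit support of a set of checks. -/
def suppSet (K : Checks Λ E) (S : Finset E) : Set Λ :=
  ↑(S.biUnion fun α => psupp (K.str α))

variable [LinearOrder E]

/-- Ordered product of operators over a finite set of check labels. -/
def ordProd (S : Finset E) (f : E → Op Λ) : Op Λ :=
  ((S.sort (· ≤ ·)).map f).prod

/-- The codespace projector P = ∏_α G_α (for commuting checks). -/
def Pmat (K : Checks Λ E) : Op Λ := ordProd Finset.univ (Gop K)

/-- The code distance: minimal support of a Pauli string p with P p P not proportional to P. -/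
def codeDist (K : Checks Λ E) : ℕ :=
  sInf ((fun p => (psupp p).card) ''
    {p : Λ → Fin 4 | ¬∃ cc : ℂ, Pmat K * pauliOp p * Pmat K = cc • Pmat K})

/-- TQO-I: Pauli strings of weight below the code distance commuting with 𝒢 belong to 𝒢. -/
def TQO1 (K : Checks Λ E) : Prop :=
  ∀ p : Λ → Fin 4, (psupp p).card < codeDist K →
    (∀ g ∈ stab K, Commute (pauliOp p) g) → pauliOp p ∈ stab K

/-- TQO-II: group elements locally supported on a small connected check set S are generated by
checks within distance ℓ|S| of S. -/
def TQO2 (K : Checks Λ E) (ℓ dtil : ℝ) : Prop :=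
  ∀ S : Finset E, ConnIn (checkGraph K) S → (S.card : ℝ) < dtil →
    ∀ g ∈ stab K, opSupp (g : Op Λ) ⊆ suppSet K S →
      (g : Op Λ) ∈ Submonoid.closure (checkOp K '' {α | ∃ β ∈ S, inBall (checkGraph K) β α (ℓ * S.card)})

/-! ### Words and operator-collections -/

/-- A word: a quadruple of pairwise disjoint subsets of the checks,
labelled (+, -, excited, ground). -/
structure Word (E : Type) where
  p : Finset E
  m : Finset E
  e : Finset E
  g : Finset E
  hpm : Disjoint p m
  hpe : Disjoint p e
  hpg : Disjoint p g
  hme : Disjoint m e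
  hmg : Disjoint m g
  heg : Disjoint e g

/-- The underlying set of the word. -/
def Word.S [DecidableEq E] (w : Word E) : Finset E := w.p ∪ w.m ∪ w.e ∪ w.g

instance : Fintype (Word E) := by
  classical
  exact Fintype.ofInjective (fun w : Word E => (w.p, w.m, w.e, w.g))
    (by
      rintro ⟨a1, a2, a3, a4, _, _, _, _, _, _⟩ ⟨b1, b2, b3, b4, _, _, _, _, _, _⟩ h
      simp only [Prod.mk.injEq] at h
      obtain ⟨h1, h2, h3, h4⟩ := h
      subst h1; subst h2; subst h3; subst h4; rfl)

/-- A word is a ghost if all components except the ground one are empty. -/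
def IsGhost (w : Word E) : Prop := w.p = ∅ ∧ w.m = ∅ ∧ w.e = ∅

/-- The empty word. -/
def emptyWord (E : Type) : Word E :=
  ⟨∅, ∅, ∅, ∅, by simp, by simp, by simp, by simp, by simp, by simp⟩

/-- Left projector assignment of a word. -/
def leftP (K : Checks Λ E) (w : Word E) (α : E) : Op Λ :=
  if α ∈ w.m ∪ w.g then Gop K α else Eop K α

/-- Right projector assignment of a word. -/
def rightP (K : Checks Λ E) (w : Word E) (α : E) : Op Λ :=
  if α ∈ w.p ∪ w.g then Gop K α else Eop K α

/-- The class 𝒳_𝐒 of operators compatible with the word 𝐒. -/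
def memClass (K : Checks Λ E) (w : Word E) (X : Op Λ) : Prop :=
  ∃ Y : Op Λ,
    (∀ α : E, (opSupp Y ∩ (psupp (K.str α) : Set Λ)).Nonempty → α ∈ w.S) ∧
    X = ordProd w.S (leftP K w) * Y * ordProd w.S (rightP K w)

/-- An operator-collection: a family (O_𝐒)_𝐒 with O_𝐒 ∈ 𝒳_𝐒. -/
def IsColl (K : Checks Λ E) (O : Word E → Op Λ) : Prop :=
  ∀ w, memClass K w (O w)

/-- The intensive word norm ‖O‖_μ of an operator-collection. -/
def wordNorm (μ : ℝ) (O : Word E → Op Λ) : ℝ :=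
  ⨆ α : E, ∑ w : Word E, (if α ∈ w.S then opNorm (O w) * Real.exp (μ * w.S.card) else 0)

/-! ### The multiplication table of words -/

/-- Labels of a check in a word: none, ground, excited, raising, lowering. -/
inductive Lbl | N | G | E | P | M
deriving DecidableEq

/-- The multiplication table of labels; `none` encodes that the product vanishes. -/
def lblMul : Lbl → Lbl → Option Lbl
  | .N, x => some x
  | .G, .N => some .G
  | .G, .G => some .G
  | .G, .E => none
  | .G, .P => none
  | .G, .M => some .M
  | .E, .N => some .E
  | .E, .G => none
  | .E, .E => some .E
  | .E, .P => some .P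
  | .E, .M => none
  | .P, .N => some .P
  | .P, .G => some .P
  | .P, .E => none
  | .P, .P => none
  | .P, .M => some .E
  | .M, .N => some .M
  | .M, .G => none
  | .M, .E => some .M
  | .M, .P => some .G
  | .M, .M => none

/-- The label of a check in a word. -/
def Word.lbl [DecidableEq E] (w : Word E) (α : E) : Lbl :=
  if α ∈ w.p then .P else if α ∈ w.m then .M else if α ∈ w.e then .E
  else if α ∈ w.g then .G else .N

/-- The product of two words is defined (the corresponding operator product does not vanish
identically by the multiplication table). -/
def MulDef (w' w : Word E) : Prop :=
  ∀ α : E, lblMul (w'.lbl α) (w.lbl α) ≠ none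

private lemma disj_aux {f : E → Option Lbl} {a b : Lbl} (hab : a ≠ b) :
    Disjoint (Finset.univ.filter fun α => f α = some a)
      (Finset.univ.filter fun α => f α = some b) := by
  rw [Finset.disjoint_left]
  intro x hx hy
  simp only [Finset.mem_filter] at hx hy
  exact hab (Option.some.inj (hx.2.symm.trans hy.2))

/-- The product word 𝐒'𝐒 (meaningful when `MulDef w' w`). -/
def wmul (w' w : Word E) : Word E where
  p := Finset.univ.filter fun α => lblMul (w'.lbl α) (w.lbl α) = some .P
  m := Finset.univ.filter fun α => lblMul (w'.lbl α) (w.lbl α) = some .M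
  e := Finset.univ.filter fun α => lblMul (w'.lbl α) (w.lbl α) = some .E
  g := Finset.univ.filter fun α => lblMul (w'.lbl α) (w.lbl α) = some .G
  hpm := disj_aux (by decide)
  hpe := disj_aux (by decide)
  hpg := disj_aux (by decide)
  hme := disj_aux (by decide)
  hmg := disj_aux (by decide)
  heg := disj_aux (by decide)

/-- The commutator of two operator-collections. -/
def collComm (O O' : Word E → Op Λ) : Word E → Op Λ := fun w =>
  ∑ w1 : Word E, ∑ w2 : Word E,
    if MulDef w1 w2 ∧ wmul w1 w2 = w ∧ (w1.S ∩ w2.S).Nonempty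
    then O w1 * O' w2 - O' w1 * O w2 else 0

/-- Iterated adjoint action ad_{B_k}⋯ad_{B_1}(B_0) of operator-collections. -/
def chainAd (B : ℕ → Word E → Op Λ) : ℕ → Word E → Op Λ
  | 0 => B 0
  | k + 1 => collComm (B (k + 1)) (chainAd B k)

/-- exp(i ad_A)(B) for operator-collections, defined componentwise. -/
def expAd (A B : Word E → Op Λ) : Word E → Op Λ := fun w =>
  ∑' k : ℕ, ((Complex.I ^ k / (k.factorial : ℂ)) • ((fun C => collComm A C)^[k] B) w)

/-! ### Sequences of words -/

/-- The running products 𝐒'_i of a sequence of words. -/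
def sprime (σ : ℕ → Word E) : ℕ → Word E
  | 0 => σ 0
  | i + 1 => wmul (σ (i + 1)) (sprime σ i)

/-- The running products with ghost words skipped. -/
def sprimeG (σ : ℕ → Word E) : ℕ → Word E
  | 0 => σ 0
  | i + 1 => if IsGhost (σ (i + 1)) then sprimeG σ i else wmul (σ (i + 1)) (sprimeG σ i)

/-- Extend a finite sequence of words by the empty word. -/
def extend {k : ℕ} (σ : Fin (k + 1) → Word E) : ℕ → Word E :=
  fun i => if h : i < k + 1 then σ ⟨i, h⟩ else emptyWord E

/-! ### Pauli norms -/

/-- Size of a minimal connected set of qubits containing the support of `p`. -/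
def mSize (K : Checks Λ E) (p : Λ → Fin 4) : ℕ :=
  sInf {n | ∃ T : Finset Λ, ConnIn (qubitGraph K) T ∧ psupp p ⊆ T ∧ T.card = n}

/-- The intensive Pauli norm of an operator given by Pauli coefficients `c`. -/
def pauliNormC (K : Checks Λ E) (μ : ℝ) (c : (Λ → Fin 4) → ℂ) : ℝ :=
  ⨆ x : Λ, ∑ p : Λ → Fin 4, (if p x ≠ 0 then ‖c p‖ * Real.exp (μ * (mSize K p : ℝ)) else 0)

/-- The intensive Pauli norm of an operator. -/
def pauliNormOp (K : Checks Λ E) (μ : ℝ) (A : Op Λ) : ℝ :=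
  pauliNormC K μ (pauliCoeff A)

/-- Diameter of the qubit graph. -/
def diam (K : Checks Λ E) : ℕ :=
  Finset.univ.sup fun pr : Λ × Λ => (qubitGraph K).dist pr.1 pr.2

/-- The spectral projector of a Hermitian matrix onto the eigenvalues in [-δ, δ]. -/
def spectralProjLE {n : Type} [Fintype n] [DecidableEq n] {A : Matrix n n ℂ}
    (hA : A.IsHermitian) (δ : ℝ) : Matrix n n ℂ :=
  (hA.eigenvectorUnitary : Matrix n n ℂ) *
    Matrix.diagonal (fun i => if |hA.eigenvalues i| ≤ δ then (1 : ℂ) else 0) *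
    star (hA.eigenvectorUnitary : Matrix n n ℂ)

/-!
A commutator of word-collections only pairs words that share a check, and a word `x` can be met
through any of its `#x.S` checks. This factor is paid for by lowering the decay rate: if
`t e^{-(ν - ν') t} ≤ M` for all `t ≥ 1`, then `‖[A, B]‖_{ν'} ≤ 4 M ‖A‖_ν ‖B‖_ν`, where one may take
`M = 1 / (e δ)` or, using `t ≤ t²`, `M = 4 / (e δ)²` with `δ = ν - ν'`.

For the `k`-th term of `exp (i ad_{B¹}) B⁰` split `Δ = μ - μ'` into `k` steps `δ = Δ / k`; paying
`δ⁻²` in the innermost commutator and `δ⁻¹` in the others gives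
`‖ad_{B¹}^k B⁰‖_{μ'} ≤ (4k / (eΔ))^{k+1} ‖B¹‖_μ^k ‖B⁰‖_μ`. With `k^k ≤ e^k k!` and
`4e‖B¹‖_μ ≤ Δ` the term is at most `16 ‖B⁰‖_μ ‖B¹‖_μ Δ⁻² · k e^{-k}`, and
`∑ k e^{-k} = e / (e - 1)² ≤ e / 2`.
-/

-- Under this instance `‖A‖` is `opNorm A` by definition.
open scoped Matrix.Norms.L2Operator Nat
open Finset Real

def wordWeight (μ : ℝ) (O : Word E → Op Λ) (w : Word E) : ℝ :=
  ‖O w‖ * exp (μ * #w.S)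

def wordNormAt (μ : ℝ) (O : Word E → Op Λ) (α : E) : ℝ :=
  ∑ w with α ∈ w.S, wordWeight μ O w

section WordNorm

variable {μ ν : ℝ} {O O' : Word E → Op Λ}

lemma wordNorm_eq_iSup_wordNormAt : wordNorm μ O = ⨆ α, wordNormAt μ O α := by
  simp only [wordNormAt, sum_filter]
  rfl

lemma wordWeight_nonneg (w : Word E) : 0 ≤ wordWeight μ O w := by
  unfold wordWeight
  positivity

lemma wordWeight_mono (h : μ ≤ ν) (w : Word E) : wordWeight μ O w ≤ wordWeight ν O w := by
  unfold wordWeight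
  gcongr

lemma wordNormAt_nonneg (α : E) : 0 ≤ wordNormAt μ O α :=
  sum_nonneg fun w _ => wordWeight_nonneg w

lemma wordNormAt_le_wordNorm (α : E) : wordNormAt μ O α ≤ wordNorm μ O := by
  rw [wordNorm_eq_iSup_wordNormAt]
  exact le_ciSup (Set.finite_range _).bddAbove α

lemma wordNorm_nonneg : 0 ≤ wordNorm μ O := by
  rw [wordNorm_eq_iSup_wordNormAt]
  exact Real.iSup_nonneg wordNormAt_nonneg

lemma wordNorm_le {M : ℝ} (hM : 0 ≤ M) (h : ∀ α, wordNormAt μ O α ≤ M) :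
    wordNorm μ O ≤ M := by
  rw [wordNorm_eq_iSup_wordNormAt]
  exact Real.iSup_le h hM

lemma wordWeight_le_wordNorm {w : Word E} {α : E} (hα : α ∈ w.S) :
    wordWeight μ O w ≤ wordNorm μ O :=
  (single_le_sum (fun w _ => wordWeight_nonneg w) (mem_filter.2 ⟨mem_univ w, hα⟩)).trans
    (wordNormAt_le_wordNorm α)

lemma wordNorm_mono (h : μ ≤ ν) : wordNorm μ O ≤ wordNorm ν O :=
  wordNorm_le wordNorm_nonneg fun α =>
    (sum_le_sum fun w _ => wordWeight_mono h w).trans (wordNormAt_le_wordNorm α)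

lemma wordNorm_add_le : wordNorm μ (O + O') ≤ wordNorm μ O + wordNorm μ O' := by
  refine wordNorm_le (add_nonneg wordNorm_nonneg wordNorm_nonneg) fun α => ?_
  calc wordNormAt μ (O + O') α ≤ wordNormAt μ O α + wordNormAt μ O' α := by
        rw [wordNormAt, wordNormAt, wordNormAt, ← sum_add_distrib]
        refine sum_le_sum fun w _ => ?_
        rw [wordWeight, wordWeight, wordWeight, ← add_mul]
        gcongr
        exact norm_add_le _ _
    _ ≤ wordNorm μ O + wordNorm μ O' :=
        add_le_add (wordNormAt_le_wordNorm α) (wordNormAt_le_wordNorm α)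

lemma wordNorm_smul (c : ℂ) : wordNorm μ (c • O) = ‖c‖ * wordNorm μ O := by
  simp only [wordNorm_eq_iSup_wordNormAt, Real.mul_iSup_of_nonneg (norm_nonneg c), wordNormAt,
    mul_sum, wordWeight, Pi.smul_apply, norm_smul, mul_assoc]

lemma wordNorm_congr (h : ∀ w : Word E, w.S.Nonempty → O w = O' w) :
    wordNorm μ O = wordNorm μ O' := by
  simp only [wordNorm_eq_iSup_wordNormAt, wordNormAt]
  congr! 2 with α
  refine sum_congr rfl fun w hw => ?_
  rw [wordWeight, wordWeight, h w ⟨α, (mem_filter.1 hw).2⟩]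

end WordNorm

section Series

variable {μ : ℝ} {F : ℕ → Word E → Op Λ}

lemma summable_wordWeight_of_summable_wordNorm (hF : Summable fun k => wordNorm μ (F k))
    {w : Word E} {α : E} (hα : α ∈ w.S) : Summable fun k => wordWeight μ (F k) w :=
  hF.of_nonneg_of_le (fun _ => wordWeight_nonneg w) fun _ => wordWeight_le_wordNorm hα

lemma summable_norm_apply_of_summable_wordNorm (hF : Summable fun k => wordNorm μ (F k))
    {w : Word E} (hw : w.S.Nonempty) : Summable fun k => ‖F k w‖ := by
  obtain ⟨α, hα⟩ := hw
  simpa [wordWeight] using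
    (summable_wordWeight_of_summable_wordNorm hF hα).mul_right (exp (μ * #w.S))⁻¹

lemma wordNorm_tsum_le (hF : Summable fun k => wordNorm μ (F k)) :
    wordNorm μ (fun w => ∑' k, F k w) ≤ ∑' k, wordNorm μ (F k) := by
  refine wordNorm_le (tsum_nonneg fun _ => wordNorm_nonneg) fun α => ?_
  have hweight : ∀ w ∈ ({w | α ∈ w.S} : Finset (Word E)),
      wordWeight μ (fun w => ∑' k, F k w) w ≤ ∑' k, wordWeight μ (F k) w := by
    intro w hw
    simp only [wordWeight, tsum_mul_right]
    gcongr
    exact norm_tsum_le_tsum_norm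
      (summable_norm_apply_of_summable_wordNorm hF ⟨α, (mem_filter.1 hw).2⟩)
  have hsum : Summable fun k => wordNormAt μ (F k) α :=
    hF.of_nonneg_of_le (fun _ => wordNormAt_nonneg α) fun _ => wordNormAt_le_wordNorm α
  calc wordNormAt μ (fun w => ∑' k, F k w) α
      ≤ ∑ w with α ∈ w.S, ∑' k, wordWeight μ (F k) w := sum_le_sum hweight
    _ = ∑' k, wordNormAt μ (F k) α :=
        (Summable.tsum_finsetSum fun w hw =>
          summable_wordWeight_of_summable_wordNorm hF (mem_filter.1 hw).2).symm
    _ ≤ ∑' k, wordNorm μ (F k) := hsum.tsum_le_tsum (fun _ => wordNormAt_le_wordNorm α) hF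

end Series

section Words

lemma Word.lbl_eq_N_of_notMem {w : Word E} {α : E} (h : α ∉ w.S) : w.lbl α = Lbl.N := by
  simp only [Word.S, mem_union, not_or] at h
  simp [Word.lbl, h]

lemma mem_or_mem_of_mem_wmul_S {w₁ w₂ : Word E} {α : E} (h : α ∈ (wmul w₁ w₂).S) :
    α ∈ w₁.S ∨ α ∈ w₂.S := by
  by_contra! hα
  simp only [Word.S, wmul, mem_union, mem_filter, mem_univ, true_and] at h
  simp [Word.lbl_eq_N_of_notMem hα.1, Word.lbl_eq_N_of_notMem hα.2, lblMul] at h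

lemma card_wmul_S_le (w₁ w₂ : Word E) : #(wmul w₁ w₂).S ≤ #w₁.S + #w₂.S :=
  (card_le_card fun _ hα => mem_union.2 (mem_or_mem_of_mem_wmul_S hα)).trans (card_union_le _ _)

end Words

section Commutator

variable {ν' ν M : ℝ} {A B : Word E → Op Λ}

lemma sum_wordWeight_meeting_le (T : Finset E) :
    ∑ w with (T ∩ w.S).Nonempty, wordWeight ν B w ≤ #T * wordNorm ν B := by
  calc ∑ w with (T ∩ w.S).Nonempty, wordWeight ν B w
      ≤ ∑ w, ∑ β ∈ T, if β ∈ w.S then wordWeight ν B w else 0 := by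
        rw [sum_filter]
        refine sum_le_sum fun w _ => ?_
        split_ifs with hw
        · rw [← sum_filter, sum_const, nsmul_eq_mul, filter_mem_eq_inter]
          exact le_mul_of_one_le_left (wordWeight_nonneg w) (by exact_mod_cast hw.card_pos)
        · exact sum_nonneg fun β _ => by split_ifs <;> simp [wordWeight_nonneg]
    _ = ∑ β ∈ T, wordNormAt ν B β := by
        rw [sum_comm]
        simp only [wordNormAt, sum_filter]
    _ ≤ #T * wordNorm ν B := by
        rw [← nsmul_eq_mul, ← sum_const]
        exact sum_le_sum fun β _ => wordNormAt_le_wordNorm β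

lemma card_mul_wordWeight_le (hM : ∀ t : ℕ, 1 ≤ t → t * exp (-((ν - ν') * t)) ≤ M)
    {w : Word E} (hw : w.S.Nonempty) : #w.S * wordWeight ν' A w ≤ M * wordWeight ν A w := by
  have hexp : exp (ν' * #w.S) = exp (-((ν - ν') * #w.S)) * exp (ν * #w.S) := by
    rw [← exp_add]; ring_nf
  calc #w.S * wordWeight ν' A w = (#w.S * exp (-((ν - ν') * #w.S))) * wordWeight ν A w := by
        rw [wordWeight, wordWeight, hexp]; ring
    _ ≤ M * wordWeight ν A w := by
        gcongr
        · exact wordWeight_nonneg w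
        · exact hM _ hw.card_pos

lemma sum_wordWeight_mul_meeting_le (hν : ν' ≤ ν)
    (hM : ∀ t : ℕ, 1 ≤ t → t * exp (-((ν - ν') * t)) ≤ M) (α : E) :
    ∑ p : Word E × Word E with (p.1.S ∩ p.2.S).Nonempty ∧ α ∈ p.1.S,
      wordWeight ν' A p.1 * wordWeight ν' B p.2 ≤ M * wordNorm ν A * wordNorm ν B := by
  have hM0 : 0 ≤ M := (by positivity : (0 : ℝ) ≤ (1 : ℕ) * exp _).trans (hM 1 le_rfl)
  calc ∑ p : Word E × Word E with (p.1.S ∩ p.2.S).Nonempty ∧ α ∈ p.1.S,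
        wordWeight ν' A p.1 * wordWeight ν' B p.2
      = ∑ x with α ∈ x.S, wordWeight ν' A x *
          ∑ y with (x.S ∩ y.S).Nonempty, wordWeight ν' B y := by
        rw [sum_filter, Fintype.sum_prod_type, sum_filter]
        refine sum_congr rfl fun x _ => ?_
        by_cases hx : α ∈ x.S <;> simp [hx, sum_filter, mul_sum]
    _ ≤ ∑ x with α ∈ x.S, wordWeight ν' A x * (#x.S * wordNorm ν B) := by
        gcongr with x
        · exact wordWeight_nonneg x
        · exact (sum_le_sum fun y _ => wordWeight_mono hν y).trans (sum_wordWeight_meeting_le x.S)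
    _ ≤ ∑ x with α ∈ x.S, M * wordWeight ν A x * wordNorm ν B := by
        refine sum_le_sum fun x hx => ?_
        rw [← mul_assoc, mul_comm (wordWeight ν' A x)]
        exact mul_le_mul_of_nonneg_right (card_mul_wordWeight_le hM ⟨α, (mem_filter.1 hx).2⟩)
          wordNorm_nonneg
    _ = M * wordNormAt ν A α * wordNorm ν B := by
        rw [wordNormAt, mul_sum, sum_mul]
    _ ≤ M * wordNorm ν A * wordNorm ν B := by
        gcongr
        · exact wordNorm_nonneg
        · exact wordNormAt_le_wordNorm α

def commWeight (ν' : ℝ) (A B : Word E → Op Λ) (p : Word E × Word E) : ℝ :=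
  wordWeight ν' A p.1 * wordWeight ν' B p.2 + wordWeight ν' B p.1 * wordWeight ν' A p.2

lemma commWeight_nonneg (p : Word E × Word E) : 0 ≤ commWeight ν' A B p :=
  add_nonneg (mul_nonneg (wordWeight_nonneg _) (wordWeight_nonneg _))
    (mul_nonneg (wordWeight_nonneg _) (wordWeight_nonneg _))

lemma norm_collComm_le (A B : Word E → Op Λ) (w : Word E) :
    ‖collComm A B w‖ ≤ ∑ p : Word E × Word E with wmul p.1 p.2 = w ∧ (p.1.S ∩ p.2.S).Nonempty,
      (‖A p.1‖ * ‖B p.2‖ + ‖B p.1‖ * ‖A p.2‖) := by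
  rw [collComm, ← Fintype.sum_prod_type', sum_filter]
  refine (norm_sum_le _ _).trans (sum_le_sum fun p _ => ?_)
  by_cases h : MulDef p.1 p.2 ∧ wmul p.1 p.2 = w ∧ (p.1.S ∩ p.2.S).Nonempty
  · rw [if_pos h, if_pos h.2]
    exact (norm_sub_le _ _).trans (add_le_add (norm_mul_le _ _) (norm_mul_le _ _))
  · rw [if_neg h, norm_zero]
    split_ifs <;> positivity

lemma wordWeight_collComm_le (hν' : 0 ≤ ν') (w : Word E) :
    wordWeight ν' (collComm A B) w ≤
      ∑ p : Word E × Word E with wmul p.1 p.2 = w ∧ (p.1.S ∩ p.2.S).Nonempty,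
        commWeight ν' A B p := by
  rw [wordWeight]
  calc ‖collComm A B w‖ * exp (ν' * #w.S)
      ≤ (∑ p : Word E × Word E with wmul p.1 p.2 = w ∧ (p.1.S ∩ p.2.S).Nonempty,
          (‖A p.1‖ * ‖B p.2‖ + ‖B p.1‖ * ‖A p.2‖)) * exp (ν' * #w.S) := by
        gcongr
        exact norm_collComm_le A B w
    _ ≤ _ := by
        rw [sum_mul]
        refine sum_le_sum fun p hp => ?_
        have hcard : (#w.S : ℝ) ≤ #p.1.S + #p.2.S := by
          rw [← (mem_filter.1 hp).2.1]
          exact_mod_cast card_wmul_S_le p.1 p.2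
        have hexp : exp (ν' * #w.S) ≤ exp (ν' * #p.1.S) * exp (ν' * #p.2.S) := by
          rw [← exp_add, ← mul_add]
          gcongr
        calc (‖A p.1‖ * ‖B p.2‖ + ‖B p.1‖ * ‖A p.2‖) * exp (ν' * #w.S)
            ≤ (‖A p.1‖ * ‖B p.2‖ + ‖B p.1‖ * ‖A p.2‖) *
                (exp (ν' * #p.1.S) * exp (ν' * #p.2.S)) := by gcongr
          _ = commWeight ν' A B p := by
              simp only [commWeight, wordWeight]
              ring

lemma wordNormAt_collComm_le (hν' : 0 ≤ ν') (α : E) :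
    wordNormAt ν' (collComm A B) α ≤
      ∑ p : Word E × Word E with (p.1.S ∩ p.2.S).Nonempty ∧ (α ∈ p.1.S ∨ α ∈ p.2.S),
        commWeight ν' A B p := by
  set R : Finset (Word E × Word E) :=
    {p | (p.1.S ∩ p.2.S).Nonempty ∧ (α ∈ p.1.S ∨ α ∈ p.2.S)}
  calc wordNormAt ν' (collComm A B) α
      ≤ ∑ w with α ∈ w.S, ∑ p ∈ R with wmul p.1 p.2 = w, commWeight ν' A B p := by
        refine sum_le_sum fun w hw => (wordWeight_collComm_le hν' w).trans ?_
        refine sum_le_sum_of_subset_of_nonneg (fun p hp => ?_) fun p _ _ => commWeight_nonneg p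
        obtain ⟨hpw, hmeet⟩ := (mem_filter.1 hp).2
        have hα : α ∈ (wmul p.1 p.2).S := hpw ▸ (mem_filter.1 hw).2
        simp [R, hpw, hmeet, mem_or_mem_of_mem_wmul_S hα]
    _ ≤ ∑ w, ∑ p ∈ R with wmul p.1 p.2 = w, commWeight ν' A B p :=
        sum_le_sum_of_subset_of_nonneg (subset_univ _) fun _ _ _ =>
          sum_nonneg fun p _ => commWeight_nonneg p
    _ = ∑ p ∈ R, commWeight ν' A B p := sum_fiberwise R _ _

lemma sum_commWeight_swap (α : E) :
    ∑ p : Word E × Word E with (p.1.S ∩ p.2.S).Nonempty ∧ α ∈ p.2.S, commWeight ν' A B p =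
      ∑ p : Word E × Word E with (p.1.S ∩ p.2.S).Nonempty ∧ α ∈ p.1.S, commWeight ν' A B p := by
  refine sum_equiv (Equiv.prodComm _ _) (fun p => ?_) fun p _ => ?_
  · simp [inter_comm]
  · simp only [commWeight, Equiv.prodComm_apply, Prod.fst_swap, Prod.snd_swap]
    ring

theorem wordNorm_collComm_le_of_forall_le (hν' : 0 ≤ ν') (hν : ν' ≤ ν)
    (hM : ∀ t : ℕ, 1 ≤ t → t * exp (-((ν - ν') * t)) ≤ M) :
    wordNorm ν' (collComm A B) ≤ 4 * M * wordNorm ν A * wordNorm ν B := by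
  have hM0 : 0 ≤ M := (by positivity : (0 : ℝ) ≤ (1 : ℕ) * exp _).trans (hM 1 le_rfl)
  refine wordNorm_le (mul_nonneg (mul_nonneg (by positivity) wordNorm_nonneg) wordNorm_nonneg)
    fun α => ?_
  calc wordNormAt ν' (collComm A B) α
      ≤ ∑ p : Word E × Word E with (p.1.S ∩ p.2.S).Nonempty ∧ (α ∈ p.1.S ∨ α ∈ p.2.S),
          commWeight ν' A B p := wordNormAt_collComm_le hν' α
    _ ≤ ∑ p : Word E × Word E with (p.1.S ∩ p.2.S).Nonempty ∧ α ∈ p.1.S, commWeight ν' A B p +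
        ∑ p : Word E × Word E with (p.1.S ∩ p.2.S).Nonempty ∧ α ∈ p.2.S, commWeight ν' A B p := by
        rw [sum_filter, sum_filter, sum_filter, ← sum_add_distrib]
        refine sum_le_sum fun p _ => ?_
        have := commWeight_nonneg (ν' := ν') (A := A) (B := B) p
        split_ifs <;> simp_all
    _ = 2 * ∑ p : Word E × Word E with (p.1.S ∩ p.2.S).Nonempty ∧ α ∈ p.1.S,
          commWeight ν' A B p := by
        rw [sum_commWeight_swap]; ring
    _ ≤ 2 * (M * wordNorm ν A * wordNorm ν B + M * wordNorm ν B * wordNorm ν A) := by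
        simp only [commWeight, sum_add_distrib]
        gcongr
        exacts [sum_wordWeight_mul_meeting_le hν hM α, sum_wordWeight_mul_meeting_le hν hM α]
    _ = 4 * M * wordNorm ν A * wordNorm ν B := by ring

end Commutator

lemma mul_exp_neg_mul_le {δ : ℝ} (hδ : 0 < δ) (t : ℝ) : t * exp (-(δ * t)) ≤ (exp 1 * δ)⁻¹ :=
  calc t * exp (-(δ * t)) = δ * t * exp (-(δ * t)) / δ := by field_simp
    _ ≤ exp (-1) / δ := by gcongr; exact mul_exp_neg_le_exp_neg_one _
    _ = (exp 1 * δ)⁻¹ := by rw [Real.exp_neg, mul_inv, div_eq_mul_inv]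

lemma mul_exp_neg_mul_le_sq {δ t : ℝ} (hδ : 0 < δ) (ht : 1 ≤ t) :
    t * exp (-(δ * t)) ≤ 4 * ((exp 1 * δ)⁻¹) ^ 2 :=
  calc t * exp (-(δ * t)) ≤ t ^ 2 * exp (-(δ * t)) := by gcongr; nlinarith
    _ = (t * exp (-(δ / 2 * t))) ^ 2 := by rw [mul_pow, ← exp_nat_mul]; ring_nf
    _ ≤ ((exp 1 * (δ / 2))⁻¹) ^ 2 :=
        pow_le_pow_left₀ (mul_nonneg (by linarith) (exp_pos _).le)
          (mul_exp_neg_mul_le (half_pos hδ) t) 2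
    _ = 4 * ((exp 1 * δ)⁻¹) ^ 2 := by field_simp; ring

section IteratedCommutator

variable {A B : Word E → Op Λ}

theorem wordNorm_collComm_le {ν' ν : ℝ} (hν' : 0 ≤ ν') (hν : ν' < ν) :
    wordNorm ν' (collComm A B) ≤ 4 / (exp 1 * (ν - ν')) * wordNorm ν A * wordNorm ν B := by
  simpa only [div_eq_mul_inv] using wordNorm_collComm_le_of_forall_le hν' hν.le
    fun t _ => mul_exp_neg_mul_le (sub_pos.2 hν) t

theorem wordNorm_collComm_le_sq {ν' ν : ℝ} (hν' : 0 ≤ ν') (hν : ν' < ν) :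
    wordNorm ν' (collComm A B) ≤
      (4 / (exp 1 * (ν - ν'))) ^ 2 * wordNorm ν A * wordNorm ν B := by
  convert wordNorm_collComm_le_of_forall_le (M := 4 * ((exp 1 * (ν - ν'))⁻¹) ^ 2) hν' hν.le
    fun t ht => mul_exp_neg_mul_le_sq (sub_pos.2 hν) (by exact_mod_cast ht) using 2
  ring

theorem wordNorm_iterate_collComm_le {δ μ : ℝ} (hδ : 0 < δ) {j : ℕ} (hj : 1 ≤ j) {ν : ℝ}
    (hν : 0 ≤ ν) (hνμ : ν + j * δ ≤ μ) :
    wordNorm ν ((collComm A)^[j] B) ≤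
      (4 / (exp 1 * δ)) ^ (j + 1) * wordNorm μ A ^ j * wordNorm μ B := by
  induction j, hj using Nat.le_induction generalizing ν with
  | base =>
    have hνδ : ν + δ ≤ μ := by simpa using hνμ
    calc wordNorm ν ((collComm A)^[1] B)
        ≤ (4 / (exp 1 * (ν + δ - ν))) ^ 2 * wordNorm (ν + δ) A * wordNorm (ν + δ) B :=
          wordNorm_collComm_le_sq hν (by linarith)
      _ ≤ (4 / (exp 1 * δ)) ^ 2 * wordNorm μ A * wordNorm μ B := by
          rw [add_sub_cancel_left]
          exact mul_le_mul (mul_le_mul_of_nonneg_left (wordNorm_mono hνδ) (by positivity))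
            (wordNorm_mono hνδ) wordNorm_nonneg (mul_nonneg (by positivity) wordNorm_nonneg)
      _ = (4 / (exp 1 * δ)) ^ (1 + 1) * wordNorm μ A ^ 1 * wordNorm μ B := by ring
  | succ j hj ih =>
    push_cast at hνμ
    have hνδ : ν + δ ≤ μ := by
      have : 0 ≤ (j : ℝ) * δ := by positivity
      linarith
    calc wordNorm ν ((collComm A)^[j + 1] B)
        ≤ 4 / (exp 1 * (ν + δ - ν)) * wordNorm (ν + δ) A *
            wordNorm (ν + δ) ((collComm A)^[j] B) := by
          rw [Function.iterate_succ_apply']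
          exact wordNorm_collComm_le hν (by linarith)
      _ ≤ 4 / (exp 1 * δ) * wordNorm μ A *
            ((4 / (exp 1 * δ)) ^ (j + 1) * wordNorm μ A ^ j * wordNorm μ B) := by
          rw [add_sub_cancel_left]
          exact mul_le_mul (mul_le_mul_of_nonneg_left (wordNorm_mono hνδ) (by positivity))
            (ih (add_nonneg hν hδ.le) (by linarith)) wordNorm_nonneg
            (mul_nonneg (by positivity) wordNorm_nonneg)
      _ = (4 / (exp 1 * δ)) ^ (j + 1 + 1) * wordNorm μ A ^ (j + 1) * wordNorm μ B := by ring

end IteratedCommutator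

lemma four_div_pow_mul_pow_div_factorial_le {N₀ N₁ Δ : ℝ} (hN₀ : 0 ≤ N₀) (hN₁ : 0 ≤ N₁)
    (hΔ : 0 < Δ) (hsmall : 4 * exp 1 * N₁ ≤ Δ) {k : ℕ} (hk : 1 ≤ k) :
    (4 / (exp 1 * (Δ / k))) ^ (k + 1) * N₁ ^ k * N₀ / k ! ≤
      16 * N₀ * N₁ / Δ ^ 2 * (k * exp (-k)) := by
  set x := 4 * exp 1 * N₁ / Δ
  have hx0 : 0 ≤ x := by positivity
  have hx1 : x ≤ 1 := (div_le_one hΔ).2 hsmall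
  have hk0 : (0 : ℝ) < k := by exact_mod_cast hk
  have hfact : (k : ℝ) ^ k / k ! ≤ exp 1 ^ k := by
    simpa using pow_div_factorial_le_exp (k : ℝ) hk0.le k
  have hsplit : (4 / (exp 1 * (Δ / k))) ^ (k + 1) * N₁ ^ k =
      4 * k / (exp 1 * Δ) * x ^ k * (k ^ k / (exp 1 ^ k) ^ 2) := by
    have ha : 4 / (exp 1 * (Δ / k)) = 4 * k / (exp 1 * Δ) := by field_simp
    have haN : 4 * k / (exp 1 * Δ) * N₁ = x * k / exp 1 ^ 2 := by
      simp only [x]; field_simp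
    rw [ha, pow_succ', mul_assoc, ← mul_pow, haN, div_pow, mul_pow, ← pow_mul, ← pow_mul,
      mul_comm 2 k]
    ring
  calc (4 / (exp 1 * (Δ / k))) ^ (k + 1) * N₁ ^ k * N₀ / k !
      = 4 * k / (exp 1 * Δ) * x ^ k * ((k : ℝ) ^ k / k !) / (exp 1 ^ k) ^ 2 * N₀ := by
        rw [hsplit]; ring
    _ ≤ 4 * k / (exp 1 * Δ) * x * exp 1 ^ k / (exp 1 ^ k) ^ 2 * N₀ := by
        gcongr
        exact pow_le_of_le_one hx0 hx1 (by omega)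
    _ = 16 * N₀ * N₁ / Δ ^ 2 * (k * exp (-k)) := by
        rw [Real.exp_neg, ← exp_one_pow]
        simp only [x]
        field_simp
        ring

lemma hasSum_succ_mul_exp_neg :
    HasSum (fun k : ℕ => ((k + 1 : ℕ) : ℝ) * exp (-((k + 1 : ℕ) : ℝ)))
      (exp 1 / (exp 1 - 1) ^ 2) := by
  have hr : ‖exp (-1)‖ < 1 := by
    rw [norm_of_nonneg (exp_pos _).le]
    exact exp_lt_one_iff.2 (by norm_num)
  have h : HasSum (fun k : ℕ => (k : ℝ) * exp (-k)) (exp 1 / (exp 1 - 1) ^ 2) := by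
    have hterm : (fun k : ℕ => (k : ℝ) * exp (-k)) = fun k : ℕ => (k : ℝ) * exp (-1) ^ k := by
      ext k
      rw [← exp_nat_mul]
      ring_nf
    have hval : exp 1 / (exp 1 - 1) ^ 2 = exp (-1) / (1 - exp (-1)) ^ 2 := by
      have : exp 1 - 1 ≠ 0 := (sub_pos.2 (one_lt_exp_iff.2 one_pos)).ne'
      rw [Real.exp_neg]
      field_simp
    rw [hterm, hval]
    exact hasSum_coe_mul_geometric_of_norm_lt_one hr
  simpa using (hasSum_nat_add_iff' 1).2 h

lemma exp_one_div_sub_one_sq_le : exp 1 / (exp 1 - 1) ^ 2 ≤ exp 1 / 2 := by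
  have := exp_one_gt_d9
  exact div_le_div_of_nonneg_left (exp_pos 1).le two_pos (by nlinarith)

lemma summable_and_tsum_le_of_le_succ_mul_exp_neg {a : ℕ → ℝ} {C : ℝ} (hC : 0 ≤ C)
    (ha0 : ∀ k, 0 ≤ a k) (ha : ∀ k, a k ≤ C * (((k + 1 : ℕ) : ℝ) * exp (-((k + 1 : ℕ) : ℝ)))) :
    Summable a ∧ ∑' k, a k ≤ C * (exp 1 / 2) := by
  have hmaj := hasSum_succ_mul_exp_neg.mul_left C
  have hsum : Summable a := hmaj.summable.of_nonneg_of_le ha0 ha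
  refine ⟨hsum, (hsum.tsum_le_tsum ha hmaj.summable).trans ?_⟩
  rw [hmaj.tsum_eq]
  exact mul_le_mul_of_nonneg_left exp_one_div_sub_one_sq_le hC

section ExpAd

variable {A B : Word E → Op Λ}

def expAdTerm (A B : Word E → Op Λ) (k : ℕ) : Word E → Op Λ :=
  (Complex.I ^ k / (k ! : ℂ)) • (collComm A)^[k] B

theorem wordNorm_expAdTerm_le {μ' μ : ℝ} (hμ' : 0 ≤ μ') (hμ : μ' < μ)
    (hsmall : 4 * exp 1 * wordNorm μ A ≤ μ - μ') {k : ℕ} (hk : 1 ≤ k) :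
    wordNorm μ' (expAdTerm A B k) ≤
      16 * wordNorm μ B * wordNorm μ A / (μ - μ') ^ 2 * (k * exp (-k)) := by
  have hΔ : 0 < μ - μ' := sub_pos.2 hμ
  have hk0 : (k : ℝ) ≠ 0 := by positivity
  have hiter := wordNorm_iterate_collComm_le (A := A) (B := B) (δ := (μ - μ') / k) (μ := μ)
    (div_pos hΔ (by positivity)) hk hμ' (le_of_eq (by field_simp; ring))
  rw [expAdTerm, wordNorm_smul, norm_div, norm_pow, Complex.norm_I, one_pow,
    Complex.norm_natCast, one_div_mul_eq_div]
  exact (div_le_div_of_nonneg_right hiter (by positivity)).trans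
    (four_div_pow_mul_pow_div_factorial_le wordNorm_nonneg wordNorm_nonneg hΔ hsmall hk)

lemma expAd_sub_self_eq_tsum {w : Word E} (hs : Summable fun k => expAdTerm A B (k + 1) w) :
    expAd A B w - B w = ∑' k, expAdTerm A B (k + 1) w := by
  change ∑' k, expAdTerm A B k w - B w = _
  rw [((summable_nat_add_iff (f := fun k => expAdTerm A B k w) 1).1 hs).tsum_eq_zero_add]
  simp [expAdTerm]

end ExpAd

theorem exp_ad_bound_general {Λ E : Type} [Fintype Λ] [DecidableEq Λ] [Fintype E]
    [LinearOrder E] (B0 B1 : Word E → Op Λ)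
    (μ' μ : ℝ) (hμ0 : 0 ≤ μ') (hμ : μ' < μ)
    (hsmall : 2 * Real.exp 1 * wordNorm μ B1 / (μ - μ') ≤ 1 / 2) :
    wordNorm μ' (fun w => expAd B1 B0 w - B0 w) ≤
        8 * Real.exp 1 / (μ - μ') ^ 2 * (wordNorm μ B0 * wordNorm μ B1) ∧
      wordNorm μ' (expAd B1 B0) ≤
        wordNorm μ B0 * (1 + 8 * Real.exp 1 * wordNorm μ B1 / (μ - μ') ^ 2) := by
  have hsmall' : 4 * exp 1 * wordNorm μ B1 ≤ μ - μ' := by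
    rw [div_le_iff₀ (sub_pos.2 hμ)] at hsmall
    linarith
  have hC : 0 ≤ 16 * wordNorm μ B0 * wordNorm μ B1 / (μ - μ') ^ 2 :=
    div_nonneg (mul_nonneg (mul_nonneg (by norm_num) wordNorm_nonneg) wordNorm_nonneg)
      (by positivity)
  obtain ⟨hsum, htsum⟩ := summable_and_tsum_le_of_le_succ_mul_exp_neg
    (a := fun k => wordNorm μ' (expAdTerm B1 B0 (k + 1))) hC (fun _ => wordNorm_nonneg)
    fun k => wordNorm_expAdTerm_le hμ0 hμ hsmall' k.succ_pos
  -- `expAd` may diverge on words with empty support, which the word norm does not see.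
  have hdiff : wordNorm μ' (fun w => expAd B1 B0 w - B0 w) ≤
      8 * exp 1 / (μ - μ') ^ 2 * (wordNorm μ B0 * wordNorm μ B1) := by
    rw [wordNorm_congr fun w hw => expAd_sub_self_eq_tsum
      (summable_norm_apply_of_summable_wordNorm hsum hw).of_norm]
    exact (wordNorm_tsum_le hsum).trans (htsum.trans_eq (by ring))
  refine ⟨hdiff, ?_⟩
  calc wordNorm μ' (expAd B1 B0)
      = wordNorm μ' ((fun w => expAd B1 B0 w - B0 w) + B0) :=
        congrArg _ (funext fun w => (sub_add_cancel _ _).symm)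
    _ ≤ wordNorm μ' (fun w => expAd B1 B0 w - B0 w) + wordNorm μ' B0 := wordNorm_add_le
    _ ≤ 8 * exp 1 / (μ - μ') ^ 2 * (wordNorm μ B0 * wordNorm μ B1) + wordNorm μ B0 :=
        add_le_add hdiff (wordNorm_mono hμ.le)
    _ = wordNorm μ B0 * (1 + 8 * exp 1 * wordNorm μ B1 / (μ - μ') ^ 2) := by ring

/-- **Norm bounds for the exponential of the adjoint action.**
For operator-collections `B⁰, B¹` with `0 ≤ μ' < μ` and `2e‖B¹‖_μ/(μ−μ') ≤ 1/2`, one has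
`‖exp(i ad_{B¹})(B⁰) − B⁰‖_{μ'} ≤ 8e(μ−μ')⁻²‖B⁰‖_μ‖B¹‖_μ` and consequently
`‖exp(i ad_{B¹})(B⁰)‖_{μ'} ≤ ‖B⁰‖_μ(1 + 8e‖B¹‖_μ(μ−μ')⁻²)`. -/
theorem exp_ad_bound {Λ E : Type} [Fintype Λ] [DecidableEq Λ] [Fintype E]
    [LinearOrder E] (K : Checks Λ E) (B0 B1 : Word E → Op Λ)
    (h0 : IsColl K B0) (h1 : IsColl K B1)
    (μ' μ : ℝ) (hμ0 : 0 ≤ μ') (hμ : μ' < μ)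
    (hsmall : 2 * Real.exp 1 * wordNorm μ B1 / (μ - μ') ≤ 1 / 2) :
    wordNorm μ' (fun w => expAd B1 B0 w - B0 w) ≤
        8 * Real.exp 1 / (μ - μ') ^ 2 * (wordNorm μ B0 * wordNorm μ B1) ∧
      wordNorm μ' (expAd B1 B0) ≤
        wordNorm μ B0 * (1 + 8 * Real.exp 1 * wordNorm μ B1 / (μ - μ') ^ 2) :=
  exp_ad_bound_general B0 B1 μ' μ hμ0 hμ hsmall

end QLDPC
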